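/- arXiv:1712.03619 — 5 statements merged into one kernel-verified Lean document; each statement's English description precedes it below -/
import Mathlib

section
/- Let r : ℕ → ℝ satisfy |r(t)| ≤ 1 for all t and r(t) → 0 as t → ∞. Let c : ℕ → ℝ satisfy ∑_{k} c_k² · k! < ∞, and let k⋆ ≥ 1 be the smallest positive index with c_{k⋆} ≠ 0. Define r_H(t) := ∑_{k ≥ k⋆} c_k² · k! · r(t)^k (the series converges absolutely for each t). Then the function t ↦ |r_H(t)| is summable over ℕ if and only if the function t ↦ |r(t)|^{k⋆} is summable over ℕ. -/
/-!
Factor `r_H(t) = r(t)^{k⋆} · g(r(t))` with `g(x) = ∑ₖ c_{k⋆+k}² (k⋆+k)! xᵏ`. Since `r(t) → 0`,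
dominated convergence gives `g(r(t)) → c_{k⋆}² k⋆! ≠ 0`, so `r_H` is asymptotically equivalent to
a nonzero multiple of `r^{k⋆}`, and in `ℝ` summability is absolute summability.
-/

open Filter Topology Asymptotics

section PowerSeries

variable {𝕜 : Type*} [NormedField 𝕜]

theorem tsum_mul_pow_add (w : ℕ → 𝕜) (x : 𝕜) (m : ℕ) :
    ∑' k, w k * x ^ (m + k) = x ^ m * ∑' k, w k * x ^ k := by
  rw [← tsum_mul_left]
  congr 1 with k
  ring

/-- Dominated convergence: once `‖u t‖ ≤ 1`, the `k`-th term is bounded by `‖w k‖`. -/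
theorem tendsto_tsum_mul_pow [CompleteSpace 𝕜] {α : Type*} {l : Filter α} {w : ℕ → 𝕜}
    (hw : Summable fun k => ‖w k‖) {u : α → 𝕜} (hu : Tendsto u l (𝓝 0)) :
    Tendsto (fun t => ∑' k, w k * u t ^ k) l (𝓝 (w 0)) := by
  have hterm : ∀ k, Tendsto (fun t => w k * u t ^ k) l (𝓝 (w k * 0 ^ k)) :=
    fun k => (hu.pow k).const_mul (w k)
  have hbound : ∀ᶠ t in l, ∀ k, ‖w k * u t ^ k‖ ≤ ‖w k‖ := by
    filter_upwards [hu.norm.eventually (ge_mem_nhds (by norm_num : ‖(0 : 𝕜)‖ < 1))]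
      with t ht k
    rw [norm_mul, norm_pow]
    exact mul_le_of_le_one_right (norm_nonneg _) (pow_le_one₀ (norm_nonneg _) ht)
  convert tendsto_tsum_of_dominated_convergence hw hterm hbound using 2
  rw [tsum_eq_single 0 fun k hk => by simp [hk]]
  simp

end PowerSeries

theorem summable_mul_iff_of_tendsto {f h : ℕ → ℝ} {L : ℝ} (hh : Tendsto h atTop (𝓝 L))
    (hL : L ≠ 0) : Summable (fun t => f t * h t) ↔ Summable f := by
  have hequiv : (fun t => f t * h t) ~[atTop] fun t => f t * L :=
    IsEquivalent.refl.mul ((isEquivalent_const_iff_tendsto hL).mpr hh)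
  rw [hequiv.summable_iff_nat, summable_mul_right_iff hL]

theorem summable_rH_iff_summable_pow_rank_general
    (r : ℕ → ℝ) (hr0 : Filter.Tendsto r Filter.atTop (nhds 0))
    (c : ℕ → ℝ) (hc : Summable fun k => c k ^ 2 * (Nat.factorial k : ℝ))
    (ks : ℕ) (hcks : c ks ≠ 0)
    (rH : ℕ → ℝ)
    (hrH : ∀ t, rH t = ∑' k : ℕ, c (ks + k) ^ 2 * (Nat.factorial (ks + k) : ℝ) * r t ^ (ks + k)) :
    (Summable fun t => |rH t|) ↔ Summable fun t => |r t| ^ ks := by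
  set w : ℕ → ℝ := fun k => c (ks + k) ^ 2 * (Nat.factorial (ks + k) : ℝ)
  have hw : Summable fun k => ‖w k‖ :=
    (hc.comp_injective (add_right_injective ks)).norm
  have hfactor : rH = fun t => r t ^ ks * ∑' k, w k * r t ^ k :=
    funext fun t => (hrH t).trans (tsum_mul_pow_add w (r t) ks)
  have hw0 : w 0 ≠ 0 := by simp [w, hcks, Nat.factorial_ne_zero]
  simp_rw [← abs_pow, summable_abs_iff, hfactor]
  exact summable_mul_iff_of_tendsto (tendsto_tsum_mul_pow hw hr0) hw0

/-- Summability-equivalence lemma (Step 2 of the proof of Theorem 5): with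
`r_H(t) = ∑_{k ≥ k⋆} c_k² k! r(t)^k`, where `k⋆ ≥ 1` is the Hermite rank (the smallest
positive index with `c_{k⋆} ≠ 0`), `∑_t |r_H(t)| < ∞` iff `∑_t |r(t)|^{k⋆} < ∞`. -/
theorem summable_rH_iff_summable_pow_rank
    (r : ℕ → ℝ) (hr1 : ∀ t, |r t| ≤ 1) (hr0 : Filter.Tendsto r Filter.atTop (nhds 0))
    (c : ℕ → ℝ) (hc : Summable fun k => c k ^ 2 * (Nat.factorial k : ℝ))
    (ks : ℕ) (hks1 : 1 ≤ ks) (hcks : c ks ≠ 0)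
    (hmin : ∀ k, 1 ≤ k → k < ks → c k = 0)
    (rH : ℕ → ℝ)
    (hrH : ∀ t, rH t = ∑' k : ℕ, c (ks + k) ^ 2 * (Nat.factorial (ks + k) : ℝ) * r t ^ (ks + k)) :
    (Summable fun t => |rH t|) ↔ Summable fun t => |r t| ^ ks :=
  summable_rH_iff_summable_pow_rank_general r hr0 c hc ks hcks rH hrH
end

section
/- Let r ∈ ℝ with |r| < 1 and let k, j be natural numbers. Then ∫_{ℝ×ℝ} He_k(x) · He_j(y) · (2π·√(1−r²))⁻¹ · exp(−(x² − 2rxy + y²)/(2(1−r²))) dx dy equals k! · r^k if k = j, and equals 0 if k ≠ j. -/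
open Real

/-!
With `s = √(1 - r²)` the density factors as `φ(x) · s⁻¹ φ((y - r x) / s) / (2π)`, where
`φ(t) = exp(-t²/2)`, and the exponent dominates `(1 - |r|)(x² + y²)`, which justifies Fubini.
After the substitution `y = r x + s z` the inner integral becomes the Mehler average
`∫ He_j(r x + s z) φ(z) dz`, and Hermite polynomials are its eigenfunctions:
`∫ He_n(a x + b z) φ(z) dz = aⁿ He_n(x) √(2π)` whenever `a² + b² = 1`. This follows from
the recurrence `He_{n+1} = x He_n - He_n'` and Gaussian integration by parts
`∫ z f(z) φ(z) dz = ∫ f'(z) φ(z) dz`: the term `b z` produces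
`b² ∫ He_n'(a x + b z) φ(z) dz`, and `b² - 1 = -a²` is what the recurrence needs.
What remains is `r^j ∫ He_k He_j φ`, and the classical orthogonality
`∫ He_k He_j φ = k! √(2π) δ_{kj}` follows from integration by parts as well,
since `p ↦ x p - p'` is adjoint to differentiation in `L²(φ)`.
-/

open Polynomial MeasureTheory

lemma integrable_eval_mul_exp_neg_mul_sq {b : ℝ} (hb : 0 < b) (p : ℝ[X]) :
    Integrable fun x : ℝ => p.eval x * exp (-b * x ^ 2) := by
  induction p using Polynomial.induction_on' with
  | add p q hp hq => simpa only [eval_add, add_mul] using hp.fun_add hq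
  | monomial n a =>
    have h := integrable_rpow_mul_exp_neg_mul_sq hb (s := n)
      (by linarith [n.cast_nonneg (α := ℝ)])
    simpa [rpow_natCast, mul_assoc] using h.const_mul a

lemma integrable_eval_mul_exp_neg_sq_div_two (p : ℝ[X]) :
    Integrable fun x : ℝ => p.eval x * exp (-x ^ 2 / 2) := by
  simpa [neg_div, div_eq_inv_mul] using
    integrable_eval_mul_exp_neg_mul_sq (b := 1 / 2) (by norm_num) p

lemma integrable_eval_affine_mul_exp_neg_sq_div_two (p : ℝ[X]) (c d : ℝ) :
    Integrable fun z : ℝ => p.eval (c + d * z) * exp (-z ^ 2 / 2) := by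
  have h := integrable_eval_mul_exp_neg_sq_div_two (p.comp (C c + C d * X))
  simp only [eval_comp, eval_add, eval_mul, eval_C, eval_X] at h
  exact h

lemma integral_exp_neg_sq_div_two : ∫ x : ℝ, exp (-x ^ 2 / 2) = √(2 * π) := by
  simpa [neg_div, div_eq_inv_mul] using integral_gaussian (1 / 2)

lemma integral_mul_eval_mul_exp_neg_sq_div_two (p : ℝ[X]) :
    ∫ x : ℝ, x * p.eval x * exp (-x ^ 2 / 2) =
      ∫ x : ℝ, (derivative p).eval x * exp (-x ^ 2 / 2) := by
  have hderiv : ∀ x : ℝ, HasDerivAt (fun x => p.eval x * exp (-x ^ 2 / 2))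
      ((derivative p).eval x * exp (-x ^ 2 / 2) - x * p.eval x * exp (-x ^ 2 / 2)) x := by
    intro x
    have hw : HasDerivAt (fun x : ℝ => -x ^ 2 / 2) (-x) x := by
      simpa using ((hasDerivAt_pow 2 x).fun_neg.div_const 2).congr_deriv (by ring)
    exact ((p.hasDerivAt x).mul hw.exp).congr_deriv (by ring)
  have hX : Integrable fun x : ℝ => x * p.eval x * exp (-x ^ 2 / 2) := by
    have h := integrable_eval_mul_exp_neg_sq_div_two (X * p)
    simp only [eval_mul, eval_X] at h
    exact h
  have h := integral_eq_zero_of_hasDerivAt_of_integrable hderiv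
    ((integrable_eval_mul_exp_neg_sq_div_two _).sub hX) (integrable_eval_mul_exp_neg_sq_div_two p)
  rwa [integral_sub (integrable_eval_mul_exp_neg_sq_div_two _) hX, sub_eq_zero, eq_comm] at h

lemma integral_eval_mul_eval_X_mul_sub_derivative_mul_exp_neg_sq_div_two (p q : ℝ[X]) :
    ∫ x : ℝ, q.eval x * (X * p - derivative p).eval x * exp (-x ^ 2 / 2) =
      ∫ x : ℝ, (derivative q).eval x * p.eval x * exp (-x ^ 2 / 2) := by
  have hqp' := integrable_eval_mul_exp_neg_sq_div_two (q * derivative p)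
  have hq'p := integrable_eval_mul_exp_neg_sq_div_two (derivative q * p)
  have hX : Integrable fun x : ℝ => x * (q.eval x * p.eval x) * exp (-x ^ 2 / 2) := by
    have h := integrable_eval_mul_exp_neg_sq_div_two (X * (q * p))
    simp only [eval_mul, eval_X] at h
    exact h
  have hstein := integral_mul_eval_mul_exp_neg_sq_div_two (q * p)
  simp only [eval_mul, derivative_mul, eval_add, add_mul] at hstein hqp' hq'p
  rw [integral_add hq'p hqp'] at hstein
  calc ∫ x : ℝ, q.eval x * (X * p - derivative p).eval x * exp (-x ^ 2 / 2)
      = ∫ x : ℝ, (x * (q.eval x * p.eval x) * exp (-x ^ 2 / 2) -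
          q.eval x * (derivative p).eval x * exp (-x ^ 2 / 2)) := by
        congr 1 with x
        simp only [eval_sub, eval_mul, eval_X]
        ring
    _ = _ := by rw [integral_sub hX hqp', hstein, add_sub_cancel_right]

lemma integral_mul_eval_affine_mul_exp_neg_sq_div_two (p : ℝ[X]) (c d : ℝ) :
    ∫ z : ℝ, z * p.eval (c + d * z) * exp (-z ^ 2 / 2) =
      d * ∫ z : ℝ, (derivative p).eval (c + d * z) * exp (-z ^ 2 / 2) := by
  have h := integral_mul_eval_mul_exp_neg_sq_div_two (p.comp (C c + C d * X))
  simp only [eval_comp, derivative_comp, eval_mul, eval_add, eval_C, eval_X, derivative_add,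
    derivative_C, derivative_mul, derivative_X, zero_add, zero_mul, mul_one] at h
  rw [h, ← integral_const_mul]
  congr 1 with z
  ring

lemma integral_eval_affine_X_mul_sub_derivative_mul_exp_neg_sq_div_two {a b : ℝ}
    (hab : a ^ 2 + b ^ 2 = 1) (x : ℝ) (p : ℝ[X]) :
    ∫ z : ℝ, (X * p - derivative p).eval (a * x + b * z) * exp (-z ^ 2 / 2) =
      a * x * (∫ z : ℝ, p.eval (a * x + b * z) * exp (-z ^ 2 / 2)) -
        a ^ 2 * ∫ z : ℝ, (derivative p).eval (a * x + b * z) * exp (-z ^ 2 / 2) := by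
  have hp := integrable_eval_affine_mul_exp_neg_sq_div_two p (a * x) b
  have hp' := integrable_eval_affine_mul_exp_neg_sq_div_two (derivative p) (a * x) b
  have hz : Integrable fun z : ℝ => z * p.eval (a * x + b * z) * exp (-z ^ 2 / 2) := by
    have h := integrable_eval_mul_exp_neg_sq_div_two (X * p.comp (C (a * x) + C b * X))
    simp only [eval_mul, eval_X, eval_comp, eval_add, eval_C] at h
    exact h
  calc ∫ z : ℝ, (X * p - derivative p).eval (a * x + b * z) * exp (-z ^ 2 / 2)
      = ∫ z : ℝ, (a * x * (p.eval (a * x + b * z) * exp (-z ^ 2 / 2)) +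
          b * (z * p.eval (a * x + b * z) * exp (-z ^ 2 / 2)) -
          (derivative p).eval (a * x + b * z) * exp (-z ^ 2 / 2)) := by
        congr 1 with z
        simp only [eval_sub, eval_mul, eval_X]
        ring
    _ = a * x * (∫ z : ℝ, p.eval (a * x + b * z) * exp (-z ^ 2 / 2)) +
          b * (b * ∫ z : ℝ, (derivative p).eval (a * x + b * z) * exp (-z ^ 2 / 2)) -
          ∫ z : ℝ, (derivative p).eval (a * x + b * z) * exp (-z ^ 2 / 2) := by
        rw [integral_sub ((hp.const_mul _).fun_add (hz.const_mul _)) hp',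
          integral_add (hp.const_mul _) (hz.const_mul _), integral_const_mul, integral_const_mul,
          integral_mul_eval_affine_mul_exp_neg_sq_div_two]
    _ = _ := by
        linear_combination
          (∫ z : ℝ, (derivative p).eval (a * x + b * z) * exp (-z ^ 2 / 2)) * hab

lemma derivative_hermite_succ (n : ℕ) :
    derivative (hermite (n + 1)) = (n + 1 : ℤ[X]) * hermite n := by
  induction n with
  | zero => simp [hermite_zero]
  | succ n ih =>
    rw [hermite_succ (n + 1), derivative_sub, derivative_mul, derivative_X, ih, derivative_mul,
      hermite_succ n]
    simp only [derivative_add, derivative_natCast, derivative_one]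
    push_cast
    ring

lemma aeval_hermite_succ_succ (n : ℕ) (x : ℝ) :
    aeval x (hermite (n + 2)) =
      x * aeval x (hermite (n + 1)) - (n + 1) * aeval x (hermite n) := by
  rw [hermite_succ (n + 1), derivative_hermite_succ]
  simp

lemma integral_aeval_hermite_succ_affine_mul_exp_neg_sq_div_two {a b : ℝ}
    (hab : a ^ 2 + b ^ 2 = 1) (x : ℝ) (n : ℕ) :
    ∫ z : ℝ, aeval (a * x + b * z) (hermite (n + 1)) * exp (-z ^ 2 / 2) =
      a * x * (∫ z : ℝ, aeval (a * x + b * z) (hermite n) * exp (-z ^ 2 / 2)) -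
        a ^ 2 * ∫ z : ℝ, aeval (a * x + b * z) (derivative (hermite n)) * exp (-z ^ 2 / 2) := by
  rw [hermite_succ]
  simpa only [eval_map_algebraMap, derivative_map, Polynomial.map_sub, Polynomial.map_mul,
    Polynomial.map_X, eval_sub, eval_mul, eval_X, map_sub, map_mul, aeval_X] using
    integral_eval_affine_X_mul_sub_derivative_mul_exp_neg_sq_div_two hab x
      ((hermite n).map (algebraMap ℤ ℝ))

lemma integral_aeval_hermite_affine_mul_exp_neg_sq_div_two {a b : ℝ} (hab : a ^ 2 + b ^ 2 = 1)
    (x : ℝ) (n : ℕ) :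
    ∫ z : ℝ, aeval (a * x + b * z) (hermite n) * exp (-z ^ 2 / 2) =
      a ^ n * aeval x (hermite n) * √(2 * π) := by
  induction n using Nat.twoStepInduction with
  | zero => simp [hermite_zero, integral_exp_neg_sq_div_two]
  | one =>
    rw [integral_aeval_hermite_succ_affine_mul_exp_neg_sq_div_two hab]
    simp [hermite_zero, integral_exp_neg_sq_div_two]
  | more n ih₀ ih₁ =>
    rw [integral_aeval_hermite_succ_affine_mul_exp_neg_sq_div_two hab, derivative_hermite_succ]
    simp only [map_mul, map_add, map_natCast, map_one, mul_assoc, integral_const_mul]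
    rw [ih₀, ih₁, aeval_hermite_succ_succ]
    ring

lemma integral_aeval_hermite_mul_aeval_hermite_mul_exp_neg_sq_div_two (m n : ℕ) :
    ∫ x : ℝ, aeval x (hermite m) * aeval x (hermite n) * exp (-x ^ 2 / 2) =
      if m = n then (m.factorial : ℝ) * √(2 * π) else 0 := by
  induction n generalizing m with
  | zero =>
    have h := integral_aeval_hermite_affine_mul_exp_neg_sq_div_two (a := 0) (b := 1)
      (by norm_num) 0 m
    simp only [zero_mul, one_mul, zero_add] at h
    cases m <;> simp_all [hermite_zero]
  | succ n ih =>
    have h := integral_eval_mul_eval_X_mul_sub_derivative_mul_exp_neg_sq_div_two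
      ((hermite n).map (algebraMap ℤ ℝ)) ((hermite m).map (algebraMap ℤ ℝ))
    simp only [eval_map_algebraMap, derivative_map, eval_sub, eval_mul, eval_X] at h
    rw [hermite_succ]
    simp only [map_sub, map_mul, aeval_X]
    rw [h]
    cases m with
    | zero => simp [hermite_zero]
    | succ k =>
      calc ∫ x : ℝ, aeval x (derivative (hermite (k + 1))) * aeval x (hermite n) *
            exp (-x ^ 2 / 2)
          = ∫ x : ℝ, ((k : ℝ) + 1) *
              (aeval x (hermite k) * aeval x (hermite n) * exp (-x ^ 2 / 2)) := by
            congr 1 with x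
            simp only [derivative_hermite_succ, map_mul, map_add, map_natCast, map_one]
            ring
        _ = if k + 1 = n + 1 then ((k + 1).factorial : ℝ) * √(2 * π) else 0 := by
            rw [integral_const_mul, ih, Nat.factorial_succ]
            split_ifs <;> simp_all
            ring

lemma integral_mul_exp_neg_sq_div_sq {s : ℝ} (hs : 0 < s) (μ : ℝ) (f : ℝ → ℝ) :
    ∫ y : ℝ, f y * exp (-(y - μ) ^ 2 / (2 * s ^ 2)) =
      s * ∫ z : ℝ, f (μ + s * z) * exp (-z ^ 2 / 2) := by
  calc ∫ y : ℝ, f y * exp (-(y - μ) ^ 2 / (2 * s ^ 2))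
      = ∫ t : ℝ, f (μ + t) * exp (-t ^ 2 / (2 * s ^ 2)) := by
        rw [← integral_add_left_eq_self _ μ]
        simp only [add_sub_cancel_left]
    _ = s * ∫ z : ℝ, f (μ + s * z) * exp (-(s * z) ^ 2 / (2 * s ^ 2)) := by
        rw [Measure.integral_comp_mul_left (fun t => f (μ + t) * exp (-t ^ 2 / (2 * s ^ 2))),
          abs_inv, abs_of_pos hs, smul_eq_mul, mul_inv_cancel_left₀ hs.ne']
    _ = s * ∫ z : ℝ, f (μ + s * z) * exp (-z ^ 2 / 2) := by
        congr 2 with z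
        field_simp

lemma one_sub_abs_mul_add_sq_le (r x y : ℝ) :
    (1 - |r|) * (x ^ 2 + y ^ 2) ≤ x ^ 2 - 2 * r * x * y + y ^ 2 := by
  have h₁ : r * x * y ≤ |r| * |x| * |y| := by
    rw [← abs_mul, ← abs_mul]
    exact le_abs_self _
  have h₂ : 0 ≤ |r| * (|x| - |y|) ^ 2 := by positivity
  have h₃ : |r| * (|x| - |y|) ^ 2 = |r| * x ^ 2 + |r| * y ^ 2 - 2 * (|r| * |x| * |y|) := by
    rw [sub_sq, sq_abs, sq_abs]
    ring
  linarith

lemma integrable_eval_mul_eval_mul_exp_bivariate {r : ℝ} (hr : |r| < 1) (p q : ℝ[X]) :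
    Integrable fun z : ℝ × ℝ => p.eval z.1 * q.eval z.2 *
      exp (-(z.1 ^ 2 - 2 * r * z.1 * z.2 + z.2 ^ 2) / (2 * (1 - r ^ 2))) := by
  have hv : 0 < 2 * (1 - r ^ 2) := by
    rw [mul_pos_iff_of_pos_left two_pos, sub_pos, sq_lt_one_iff_abs_lt_one]
    exact hr
  set c := (1 - |r|) / (2 * (1 - r ^ 2)) with hc_def
  have hc : 0 < c := div_pos (by linarith) hv
  have hprod : Integrable fun z : ℝ × ℝ =>
      p.eval z.1 * exp (-c * z.1 ^ 2) * (q.eval z.2 * exp (-c * z.2 ^ 2)) := by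
    rw [Measure.volume_eq_prod]
    exact (integrable_eval_mul_exp_neg_mul_sq hc p).mul_prod
      (integrable_eval_mul_exp_neg_mul_sq hc q)
  refine hprod.mono (by fun_prop) (ae_of_all _ fun z => ?_)
  have hexp : exp (-(z.1 ^ 2 - 2 * r * z.1 * z.2 + z.2 ^ 2) / (2 * (1 - r ^ 2))) ≤
      exp (-c * z.1 ^ 2) * exp (-c * z.2 ^ 2) := by
    rw [← exp_add, exp_le_exp, neg_div, show -c * z.1 ^ 2 + -c * z.2 ^ 2 =
      -((1 - |r|) * (z.1 ^ 2 + z.2 ^ 2) / (2 * (1 - r ^ 2))) by rw [hc_def]; ring, neg_le_neg_iff]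
    exact div_le_div_of_nonneg_right (one_sub_abs_mul_add_sq_le r z.1 z.2) hv.le
  simp only [norm_mul, Real.norm_eq_abs, abs_exp]
  calc |p.eval z.1| * |q.eval z.2| *
        exp (-(z.1 ^ 2 - 2 * r * z.1 * z.2 + z.2 ^ 2) / (2 * (1 - r ^ 2)))
      ≤ |p.eval z.1| * |q.eval z.2| * (exp (-c * z.1 ^ 2) * exp (-c * z.2 ^ 2)) := by gcongr
    _ = |p.eval z.1| * exp (-c * z.1 ^ 2) * (|q.eval z.2| * exp (-c * z.2 ^ 2)) := by ring

lemma integral_aeval_hermite_mul_exp_bivariate {r : ℝ} (hr : |r| < 1) (x : ℝ) (n : ℕ) :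
    ∫ y : ℝ, aeval y (hermite n) * exp (-(x ^ 2 - 2 * r * x * y + y ^ 2) / (2 * (1 - r ^ 2))) =
      √(1 - r ^ 2) * √(2 * π) * r ^ n * (aeval x (hermite n) * exp (-x ^ 2 / 2)) := by
  have hv : 0 < 1 - r ^ 2 := by rwa [sub_pos, sq_lt_one_iff_abs_lt_one]
  have hs : 0 < √(1 - r ^ 2) := sqrt_pos.2 hv
  have hrs : r ^ 2 + √(1 - r ^ 2) ^ 2 = 1 := by rw [sq_sqrt hv.le]; ring
  have hsplit : ∀ y : ℝ, exp (-(x ^ 2 - 2 * r * x * y + y ^ 2) / (2 * (1 - r ^ 2))) =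
      exp (-x ^ 2 / 2) * exp (-(y - r * x) ^ 2 / (2 * √(1 - r ^ 2) ^ 2)) := by
    intro y
    rw [← exp_add, sq_sqrt hv.le]
    congr 1
    field_simp
    ring
  simp_rw [hsplit]
  calc _ = exp (-x ^ 2 / 2) *
        ∫ y : ℝ, aeval y (hermite n) * exp (-(y - r * x) ^ 2 / (2 * √(1 - r ^ 2) ^ 2)) := by
        rw [← integral_const_mul]
        congr 1 with y
        ring
    _ = _ := by
        rw [integral_mul_exp_neg_sq_div_sq hs,
          integral_aeval_hermite_affine_mul_exp_neg_sq_div_two hrs]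
        ring

/-- Orthogonality of probabilists' Hermite polynomials against the centered bivariate Gaussian
density with unit variances and correlation `r`:
`∫ He_k(x) He_j(y) (2π√(1−r²))⁻¹ exp(−(x² − 2rxy + y²)/(2(1−r²))) dx dy = δ_{kj} k! r^k`. -/
theorem hermite_bivariate_gaussian_orthogonality (r : ℝ) (hr : |r| < 1) (k j : ℕ) :
    ∫ p : ℝ × ℝ,
        (Polynomial.aeval p.1 (Polynomial.hermite k)) *
          (Polynomial.aeval p.2 (Polynomial.hermite j)) *
          ((2 * π * Real.sqrt (1 - r ^ 2))⁻¹ *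
            Real.exp (-(p.1 ^ 2 - 2 * r * p.1 * p.2 + p.2 ^ 2) / (2 * (1 - r ^ 2)))) =
      if k = j then (Nat.factorial k : ℝ) * r ^ k else 0 := by
  have hs : 0 < √(1 - r ^ 2) := sqrt_pos.2 (by rwa [sub_pos, sq_lt_one_iff_abs_lt_one])
  have hint := (integrable_eval_mul_eval_mul_exp_bivariate hr
    ((hermite k).map (algebraMap ℤ ℝ)) ((hermite j).map (algebraMap ℤ ℝ))).const_mul
    (2 * π * √(1 - r ^ 2))⁻¹
  simp only [eval_map_algebraMap] at hint
  have hinner : ∀ x : ℝ, ∫ y : ℝ, aeval x (hermite k) * aeval y (hermite j) *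
      ((2 * π * √(1 - r ^ 2))⁻¹ *
        exp (-(x ^ 2 - 2 * r * x * y + y ^ 2) / (2 * (1 - r ^ 2)))) =
      (√(2 * π))⁻¹ * r ^ j *
        (aeval x (hermite k) * aeval x (hermite j) * exp (-x ^ 2 / 2)) := by
    intro x
    calc _ = (2 * π * √(1 - r ^ 2))⁻¹ * aeval x (hermite k) *
          ∫ y : ℝ, aeval y (hermite j) *
            exp (-(x ^ 2 - 2 * r * x * y + y ^ 2) / (2 * (1 - r ^ 2))) := by
          rw [← integral_const_mul]
          congr 1 with y
          ring
      _ = _ := by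
          rw [integral_aeval_hermite_mul_exp_bivariate hr]
          field_simp
          rw [sq_sqrt (by positivity)]
          ring
  rw [Measure.volume_eq_prod] at hint ⊢
  rw [integral_prod _ (hint.congr (ae_of_all _ fun z => by ring))]
  simp_rw [hinner]
  rw [integral_const_mul, integral_aeval_hermite_mul_aeval_hermite_mul_exp_neg_sq_div_two]
  split_ifs with hkj
  · subst hkj
    field_simp
  · simp
end

section
/- Let k ≥ 1, let G be a connected simple graph on the vertex set Fin k, and let K, N be natural numbers with N ≥ 1. Then the number of functions t : Fin k → ℤ such that 1 ≤ t(i) ≤ N for all i and |t(i) − t(j)| ≤ K whenever G has an edge between i and j, is at most N · (2K + 1)^{k−1}. -/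
/-- Counting estimate (Step 4 of the proof of Theorem 5): for a connected graph `G` on `Fin k`,
the number of `t : Fin k → ℤ` with `1 ≤ t i ≤ N` and `|t i − t j| ≤ K` along edges of `G` is at
most `N (2K+1)^{k−1}`. -/
theorem card_near_diagonal_le (k : ℕ) (hk : 1 ≤ k) (G : SimpleGraph (Fin k))
    (hG : G.Connected) (K N : ℕ) (hN : 1 ≤ N) :
    {t : Fin k → ℤ | (∀ i, 1 ≤ t i ∧ t i ≤ N) ∧
        ∀ i j, G.Adj i j → |t i - t j| ≤ K}.ncard ≤ N * (2 * K + 1) ^ (k - 1) := by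
  haveI : NeZero k := ⟨by omega⟩
  set S : Set (Fin k → ℤ) := {t : Fin k → ℤ | (∀ i, 1 ≤ t i ∧ t i ≤ N) ∧
        ∀ i j, G.Adj i j → |t i - t j| ≤ K} with hS
  -- parent function
  have Hpar : ∀ i : Fin k, i ≠ 0 → ∃ j, G.Adj i j ∧ G.dist j 0 < G.dist i 0 := by
    intro i hi
    obtain ⟨w, hw⟩ := hG.exists_walk_length_eq_dist i 0
    have hpos : 0 < G.dist i 0 := hG.pos_dist_of_ne hi
    cases w with
    | nil => simp at hw; omega
    | cons h q =>
      refine ⟨_, h, ?_⟩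
      have h1 : G.dist _ 0 ≤ q.length := SimpleGraph.dist_le q
      simp [SimpleGraph.Walk.length_cons] at hw
      omega
  choose p hp1 hp2 using Hpar
  classical
  set F : (Fin k → ℤ) → ℤ × ({i : Fin k // i ≠ 0} → ℤ) :=
    fun t => (t 0, fun i => t i.1 - t (p i.1 i.2)) with hF
  set T : Finset (ℤ × ({i : Fin k // i ≠ 0} → ℤ)) :=
    Finset.Icc (1:ℤ) N ×ˢ Fintype.piFinset (fun _ => Finset.Icc (-(K:ℤ)) K) with hT
  have hinj : Set.InjOn F S := by
    intro t ht t' ht' heq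
    have h0 : t 0 = t' 0 := congrArg Prod.fst heq
    have hdiff : ∀ i : Fin k, ∀ hi : i ≠ 0,
        t i - t (p i hi) = t' i - t' (p i hi) := by
      intro i hi
      have := congrFun (congrArg Prod.snd heq) ⟨i, hi⟩
      simpa using this
    have key : ∀ n, ∀ i : Fin k, G.dist i 0 ≤ n → t i = t' i := by
      intro n
      induction n with
      | zero =>
        intro i hle
        have : i = 0 := by
          by_contra hi
          have := hG.pos_dist_of_ne hi
          omega
        rw [this]; exact h0
      | succ m ih =>
        intro i hle
        by_cases hi : i = 0
        · rw [hi]; exact h0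
        · have hlt := hp2 i hi
          have hp' : t (p i hi) = t' (p i hi) := ih _ (by omega)
          have := hdiff i hi
          linarith
    funext i
    exact key (G.dist i 0) i le_rfl
  have hsub : F '' S ⊆ ↑T := by
    rintro _ ⟨t, ht, rfl⟩
    obtain ⟨hbd, hedge⟩ := ht
    simp only [hT, Finset.coe_product, Set.mem_prod, Finset.mem_coe, Finset.mem_Icc,
      Fintype.mem_piFinset]
    constructor
    · exact ⟨(hbd 0).1, (hbd 0).2⟩
    · intro i
      have := hedge i.1 (p i.1 i.2) (hp1 i.1 i.2)
      rw [abs_le] at this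
      exact ⟨by linarith [this.1], by linarith [this.2]⟩
  have hfin : (↑T : Set (ℤ × ({i : Fin k // i ≠ 0} → ℤ))).Finite := T.finite_toSet
  have h1 : S.ncard = (F '' S).ncard := (Set.ncard_image_of_injOn hinj).symm
  have h2 : (F '' S).ncard ≤ T.card := by
    rw [← Set.ncard_coe_finset]
    exact Set.ncard_le_ncard hsub hfin
  have hcard : T.card = N * (2 * K + 1) ^ (k - 1) := by
    rw [hT, Finset.card_product, Fintype.card_piFinset]
    have hc1 : (Finset.Icc (1:ℤ) N).card = N := by
      rw [Int.card_Icc]; omega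
    have hc2 : (Finset.Icc (-(K:ℤ)) K).card = 2 * K + 1 := by
      rw [Int.card_Icc]; omega
    have hc3 : Fintype.card {i : Fin k // i ≠ 0} = k - 1 := by
      have : Fintype.card {i : Fin k // i = 0} = 1 := Fintype.card_subtype_eq (0 : Fin k)
      have h := Fintype.card_subtype_compl (fun i : Fin k => i = 0)
      simp only [this, Fintype.card_fin] at h
      convert h using 2
    rw [hc1]
    simp only [hc2, Finset.prod_const, Finset.card_univ, hc3]
  omega
end

section
/- Let μ be a probability measure on ℝ with finite second moment, and let z ∈ ℂ with Im(z) > 0. Then | ∫_ℝ ((t : ℂ) − z)⁻¹ dμ(t) + z⁻¹ | ≤ (∫_ℝ t² dμ(t))^{1/2} / (Im z)². -/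
open MeasureTheory

/-! The resolvent identity `(t - z)⁻¹ + z⁻¹ = t / ((t - z) z)` together with `Im z ≤ |t - z|` and
`Im z ≤ |z|` bounds the integrand pointwise by `|t| / (Im z)²`; integrating, the first absolute
moment is at most the square root of the second (the variance of `|t|` is nonnegative). -/

lemma Complex.abs_im_le_norm_ofReal_sub (t : ℝ) (z : ℂ) : |z.im| ≤ ‖(t : ℂ) - z‖ := by
  simpa using Complex.abs_im_le_norm ((t : ℂ) - z)

lemma Complex.ofReal_sub_ne_zero {z : ℂ} (hz : z.im ≠ 0) (t : ℝ) : (t : ℂ) - z ≠ 0 := by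
  rw [sub_ne_zero]
  rintro rfl
  exact hz (Complex.ofReal_im t)

lemma norm_inv_ofReal_sub_add_inv_le (t : ℝ) {z : ℂ} (hz : 0 < z.im) :
    ‖((t : ℂ) - z)⁻¹ + z⁻¹‖ ≤ |t| / z.im ^ 2 := by
  have hz₀ : z ≠ 0 := by rintro rfl; simp at hz
  have him : z.im ≤ ‖(t : ℂ) - z‖ :=
    (le_abs_self _).trans (Complex.abs_im_le_norm_ofReal_sub t z)
  have him' : z.im ≤ ‖z‖ := (le_abs_self _).trans (Complex.abs_im_le_norm z)
  rw [inv_add_inv (Complex.ofReal_sub_ne_zero hz.ne' t) hz₀, sub_add_cancel, norm_div, norm_mul,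
    Complex.norm_real, Real.norm_eq_abs, sq]
  gcongr

lemma integrable_inv_ofReal_sub (μ : Measure ℝ) [IsFiniteMeasure μ] {z : ℂ} (hz : z.im ≠ 0) :
    Integrable (fun t : ℝ => ((t : ℂ) - z)⁻¹) μ := by
  refine (integrable_const |z.im|⁻¹).mono'
    ((by fun_prop : Continuous fun t : ℝ => (t : ℂ) - z).inv₀
      (Complex.ofReal_sub_ne_zero hz)).aestronglyMeasurable (ae_of_all _ fun t => ?_)
  rw [norm_inv]
  exact inv_anti₀ (abs_pos.2 hz) (Complex.abs_im_le_norm_ofReal_sub t z)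

lemma integral_abs_le_sqrt_integral_sq {Ω : Type*} [MeasurableSpace Ω] {μ : Measure Ω}
    [IsProbabilityMeasure μ] {X : Ω → ℝ} (hX : MemLp X 2 μ) :
    ∫ ω, |X ω| ∂μ ≤ Real.sqrt (∫ ω, X ω ^ 2 ∂μ) := by
  have hvar := ProbabilityTheory.variance_nonneg |X| μ
  rw [ProbabilityTheory.variance_eq_sub hX.abs] at hvar
  simp only [Pi.pow_apply, Pi.abs_apply, sq_abs] at hvar
  exact Real.le_sqrt_of_sq_le (by linarith)

/-- Stieltjes transform estimate: for a probability measure `μ` on `ℝ` with finite second moment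
and `z` in the upper half-plane, `|∫ (t − z)⁻¹ dμ(t) + z⁻¹| ≤ (∫ t² dμ)^{1/2} / (Im z)²`. -/
theorem stieltjes_transform_sub_point_mass_bound
    (μ : Measure ℝ) [IsProbabilityMeasure μ]
    (h2 : Integrable (fun t : ℝ => t ^ 2) μ)
    (z : ℂ) (hz : 0 < z.im) :
    ‖(∫ t : ℝ, ((t : ℂ) - z)⁻¹ ∂μ) + z⁻¹‖ ≤ Real.sqrt (∫ t : ℝ, t ^ 2 ∂μ) / z.im ^ 2 := by
  have hid : MemLp id 2 μ := (memLp_two_iff_integrable_sq aestronglyMeasurable_id).2 h2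
  have hsum : (∫ t : ℝ, ((t : ℂ) - z)⁻¹ ∂μ) + z⁻¹ = ∫ t : ℝ, (((t : ℂ) - z)⁻¹ + z⁻¹) ∂μ := by
    rw [integral_add (integrable_inv_ofReal_sub μ hz.ne') (integrable_const _), integral_const,
      probReal_univ, one_smul]
  calc ‖(∫ t : ℝ, ((t : ℂ) - z)⁻¹ ∂μ) + z⁻¹‖
      ≤ ∫ t : ℝ, |t| / z.im ^ 2 ∂μ :=
        hsum ▸ norm_integral_le_of_norm_le ((hid.integrable one_le_two).abs.div_const _)
          (ae_of_all _ fun t => norm_inv_ofReal_sub_add_inv_le t hz)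
    _ = (∫ t : ℝ, |t| ∂μ) / z.im ^ 2 := integral_div _ _
    _ ≤ Real.sqrt (∫ t : ℝ, t ^ 2 ∂μ) / z.im ^ 2 := by
        gcongr
        exact integral_abs_le_sqrt_integral_sq hid
end

section
/- Let k ≥ 2, let p ∈ [1, ∞), let N ≥ 1 and let a : Fin N → Fin k → (AddCircle 1 → ℂ) be functions, each lying in L^{kp} of the circle ℝ/ℤ with normalized Lebesgue (Haar) measure. Define g : (Fin k → AddCircle 1) → ℂ by g(x) := ∑_{i : Fin N} ∏_{j : Fin k} a i j (x j), and define f : (Fin (k−1) → AddCircle 1) → ℂ by f(x₁, …, x_{k−1}) := g(x₁, …, x_{k−1}, −x₁ − ⋯ − x_{k−1}). Then ‖f‖_{L^p((AddCircle 1)^{k−1})} ≤ ∑_{i : Fin N} ∏_{j : Fin k} ‖a i j‖_{L^{kp}(AddCircle 1)}. -/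
/-!
Write `f = ∑ᵢ ∏ⱼ aᵢⱼ ∘ Tⱼ`, where `T₁, …, T_{k-1}` are the coordinate maps of `(ℝ/ℤ)^{k-1}` and
`T_k y = -∑ yⱼ`. Each `Tⱼ` pushes Haar measure on `(ℝ/ℤ)^{k-1}` forward to Haar measure on `ℝ/ℤ`
(for `T_k` because adding an independent Haar-distributed variable gives a Haar-distributed one),
so `‖aᵢⱼ ∘ Tⱼ‖_{kp} = ‖aᵢⱼ‖_{kp}`. Hölder's inequality with `k` exponents `kp` bounds each product
in `L^p`, and Minkowski's inequality sums the bounds.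
-/

open MeasureTheory

instance : IsProbabilityMeasure (volume : Measure (AddCircle (1 : ℝ))) :=
  ⟨by simp [AddCircle.measure_univ]⟩

theorem ENNReal.inv_sum_const_inv_natCast_mul {k : ℕ} (hk : k ≠ 0) (p : ENNReal) :
    (∑ _j : Fin k, ((k : ENNReal) * p)⁻¹)⁻¹ = p := by
  rw [Finset.sum_const, Finset.card_univ, Fintype.card_fin, nsmul_eq_mul,
    ENNReal.mul_inv (a := k) (b := p) (.inl (Nat.cast_ne_zero.2 hk))
      (.inl (ENNReal.natCast_ne_top k)),
    ENNReal.mul_inv_cancel_left (Nat.cast_ne_zero.2 hk) (ENNReal.natCast_ne_top k), inv_inv]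

namespace MeasureTheory

section Holder

variable {ι α β 𝕜 : Type*} {_ : MeasurableSpace α} {_ : MeasurableSpace β}
  [NormedCommRing 𝕜] [NormOneClass 𝕜] {μ : Measure α} {f : ι → α → 𝕜} {p : ι → ENNReal}

theorem eLpNorm_prod_le_prod_eLpNorm (s : Finset ι)
    (hf : ∀ i ∈ s, AEStronglyMeasurable (f i) μ) :
    eLpNorm (fun x => ∏ i ∈ s, f i x) (∑ i ∈ s, (p i)⁻¹)⁻¹ μ ≤ ∏ i ∈ s, eLpNorm (f i) (p i) μ := by
  induction s using Finset.cons_induction with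
  | empty =>
    simpa using eLpNormEssSup_le_of_ae_enorm_bound (μ := μ) (.of_forall fun _ => le_refl ‖(1 : 𝕜)‖ₑ)
  | cons i s hi ih =>
    have hfs := Finset.forall_of_forall_cons hf
    have : ENNReal.HolderTriple (p i) (∑ j ∈ s, (p j)⁻¹)⁻¹ ((p i)⁻¹ + ∑ j ∈ s, (p j)⁻¹)⁻¹ :=
      ⟨by simp⟩
    simp only [Finset.prod_cons, Finset.sum_cons]
    calc eLpNorm (f i • fun x => ∏ j ∈ s, f j x) ((p i)⁻¹ + ∑ j ∈ s, (p j)⁻¹)⁻¹ μ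
        ≤ eLpNorm (f i) (p i) μ * eLpNorm (fun x => ∏ j ∈ s, f j x) (∑ j ∈ s, (p j)⁻¹)⁻¹ μ :=
          eLpNorm_smul_le_mul_eLpNorm (Finset.aestronglyMeasurable_fun_prod s hfs)
            (hf i (Finset.mem_cons_self i s))
      _ ≤ eLpNorm (f i) (p i) μ * ∏ j ∈ s, eLpNorm (f j) (p j) μ := mul_le_mul_right (ih hfs) _

theorem eLpNorm_prod_comp_le_prod_eLpNorm {ν : Measure β} {T : ι → β → α} (s : Finset ι)
    (hT : ∀ i ∈ s, MeasurePreserving (T i) ν μ) (hf : ∀ i ∈ s, AEStronglyMeasurable (f i) μ) :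
    eLpNorm (fun y => ∏ i ∈ s, f i (T i y)) (∑ i ∈ s, (p i)⁻¹)⁻¹ ν ≤
      ∏ i ∈ s, eLpNorm (f i) (p i) μ := by
  calc eLpNorm (fun y => ∏ i ∈ s, (f i ∘ T i) y) (∑ i ∈ s, (p i)⁻¹)⁻¹ ν
      ≤ ∏ i ∈ s, eLpNorm (f i ∘ T i) (p i) ν :=
        eLpNorm_prod_le_prod_eLpNorm s fun i hi => (hf i hi).comp_measurePreserving (hT i hi)
    _ = ∏ i ∈ s, eLpNorm (f i) (p i) μ :=
        Finset.prod_congr rfl fun i hi => eLpNorm_comp_measurePreserving (hf i hi) (hT i hi)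

end Holder

section HaarSum

variable {G : Type*} [AddCommGroup G] [MeasurableSpace G] [MeasurableAdd₂ G]
  (μ : Measure G) [IsProbabilityMeasure μ] [μ.IsAddLeftInvariant]

theorem measurePreserving_fst_add_snd (ν : Measure G) [IsProbabilityMeasure ν] :
    MeasurePreserving (fun z : G × G => z.1 + z.2) (ν.prod μ) μ := by
  have hsnd : MeasurePreserving Prod.snd (ν.prod μ) μ := ⟨measurable_snd, by simp⟩
  exact hsnd.comp (measurePreserving_prod_add ν μ)

theorem measurePreserving_sum_pi (m : ℕ) :
    MeasurePreserving (fun y : Fin (m + 1) → G => ∑ j, y j) (Measure.pi fun _ => μ) μ := by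
  induction m with
  | zero => simpa using measurePreserving_eval (fun _ : Fin 1 => μ) 0
  | succ m ih =>
    convert ((measurePreserving_fst_add_snd μ μ).comp ((MeasurePreserving.id μ).prod ih)).comp
      (measurePreserving_piFinSuccAbove (fun _ : Fin (m + 2) => μ) 0) using 1
    funext y
    simp [Fin.sum_univ_succ, Fin.tail]

theorem measurePreserving_snoc_neg_sum_apply [MeasurableNeg G] [μ.IsNegInvariant] (m : ℕ)
    (j : Fin (m + 2)) :
    MeasurePreserving (fun y : Fin (m + 1) → G => Fin.snoc (α := fun _ => G) y (-∑ l, y l) j)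
      (Measure.pi fun _ => μ) μ := by
  cases j using Fin.lastCases with
  | last =>
    simp only [Fin.snoc_last]
    exact (Measure.measurePreserving_neg μ).comp (measurePreserving_sum_pi μ m)
  | cast j =>
    simp only [Fin.snoc_castSucc]
    exact measurePreserving_eval (fun _ => μ) j

end HaarSum

end MeasureTheory

/-- Lemma 5.1 (cross-norm estimate): for `g(x) = ∑_i ∏_j a_{ij}(x_j)` on `(ℝ/ℤ)^k` and
`f(x₁,…,x_{k−1}) = g(x₁,…,x_{k−1}, −x₁−⋯−x_{k−1})`, one has
`‖f‖_{L^p} ≤ ∑_i ∏_j ‖a_{ij}‖_{L^{kp}}`. -/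
theorem crossnorm_restriction_bound
    (k : ℕ) (hk : 2 ≤ k) (p : ENNReal) (hp1 : 1 ≤ p)
    (N : ℕ)
    (a : Fin N → Fin k → AddCircle (1 : ℝ) → ℂ)
    (ha : ∀ i j, MemLp (a i j) ((k : ENNReal) * p) volume) :
    eLpNorm
        (fun y : Fin (k - 1) → AddCircle (1 : ℝ) =>
          ∑ i : Fin N,
            (∏ j : Fin (k - 1), a i (Fin.castLE (Nat.sub_le k 1) j) (y j)) *
              a i ⟨k - 1, by omega⟩ (-∑ j : Fin (k - 1), y j))
        p volume ≤
      ∑ i : Fin N, ∏ j : Fin k, eLpNorm (a i j) ((k : ENNReal) * p) volume := by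
  obtain ⟨n, rfl⟩ : ∃ n, k = n + 2 := ⟨k - 2, by omega⟩
  let T (j : Fin (n + 2)) (y : Fin (n + 1) → AddCircle (1 : ℝ)) : AddCircle (1 : ℝ) :=
    Fin.snoc (α := fun _ => AddCircle (1 : ℝ)) y (-∑ l, y l) j
  have hT (j : Fin (n + 2)) : MeasurePreserving (T j) volume volume :=
    measurePreserving_snoc_neg_sum_apply volume n j
  calc _ = eLpNorm (∑ i, fun y => ∏ j, a i j (T j y)) p volume := by
        congr 1
        funext y
        rw [Finset.sum_apply]
        refine Finset.sum_congr rfl fun i _ => ?_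
        rw [Fin.prod_univ_castSucc]
        simp only [T, Fin.snoc_castSucc, Fin.snoc_last]
        rfl
    _ ≤ ∑ i, eLpNorm (fun y => ∏ j, a i j (T j y)) p volume :=
        eLpNorm_sum_le (fun i _ => Finset.aestronglyMeasurable_fun_prod _ fun j _ =>
          (ha i j).1.comp_measurePreserving (hT j)) hp1
    _ ≤ _ := by
        gcongr with i
        have := eLpNorm_prod_comp_le_prod_eLpNorm (p := fun _ => ((n + 2 : ℕ) : ENNReal) * p)
          Finset.univ (fun j _ => hT j) fun j _ => (ha i j).1
        rwa [ENNReal.inv_sum_const_inv_natCast_mul (by omega)] at this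
end
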